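/- Let G be a finite simple graph with maximum degree Δ(G) = 4, and suppose every proper subgraph H of G satisfies χ_i(H) ≤ 6. If G contains two adjacent vertices of degree 3, each of which is adjacent to some (possibly the same) vertex of degree 2, then χ_i(G) ≤ 6. -/

import Mathlib

open SimpleGraph Finset

/-- An injective coloring of `G`: any two distinct vertices with a common neighbor
receive distinct colors. -/
def IsInjColoring {V α : Type*} (G : SimpleGraph V) (c : V → α) : Prop :=
  ∀ ⦃u v : V⦄, u ≠ v → (∃ w, G.Adj u w ∧ G.Adj v w) → c u ≠ c v

/-- The injective chromatic number of `G`: the least `k` such that `G` has an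
injective coloring with `k` colors. -/
noncomputable def injChromNum {V : Type*} (G : SimpleGraph V) : ℕ :=
  sInf {k | ∃ c : V → Fin k, IsInjColoring G c}

/-! Delete the edge `u₁u₂` and take an injective `6`-coloring of the rest, given by minimality.
It is still injective on all vertices other than `u₁, u₂, v₁, v₂`; recolor these four greedily
in that order. Each of them then sees at most `5` already colored vertices sharing a neighbour
with it: for `u₁` these lie in `N(u₂) \ {u₁, v₂}`, `N(v₁) \ {u₁}` and `N(w) \ {u₁}` for the third
neighbour `w`, of sizes `1, 1, ≤ 3`; symmetrically for `u₂`; and a `2`-vertex next to a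
`3`-vertex has at most `2 + 3` such vertices. -/

section InjectiveColoring

variable {V α : Type*} {G : SimpleGraph V}

theorem exists_isInjColoring_of_injChromNum_le [Finite V] {k : ℕ} (h : injChromNum G ≤ k) :
    ∃ c : V → Fin k, IsInjColoring G c := by
  have hne : {k | ∃ c : V → Fin k, IsInjColoring G c}.Nonempty := by
    obtain ⟨n, ⟨e⟩⟩ := Finite.exists_equiv_fin V
    exact ⟨n, e, fun _ _ huv _ he => huv (e.injective he)⟩
  obtain ⟨c, hc⟩ := Nat.sInf_mem hne
  exact ⟨Fin.castLE h ∘ c, fun _ _ huv hw he => hc huv hw (Fin.castLE_injective h he)⟩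

theorem injChromNum_le_of_isInjColoring {k : ℕ} {c : V → Fin k} (hc : IsInjColoring G c) :
    injChromNum G ≤ k :=
  Nat.sInf_le ⟨c, hc⟩

def IsInjColoringOn (G : SimpleGraph V) (c : V → α) (T : Finset V) : Prop :=
  ∀ ⦃u v : V⦄, u ∈ T → v ∈ T → u ≠ v → (∃ w, G.Adj u w ∧ G.Adj v w) → c u ≠ c v

theorem IsInjColoringOn.mono {c : V → α} {T T' : Finset V} (hc : IsInjColoringOn G c T)
    (hT : T' ⊆ T) : IsInjColoringOn G c T' :=
  fun _ _ hu hv => hc (hT hu) (hT hv)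

theorem isInjColoringOn_univ [Fintype V] {c : V → α} :
    IsInjColoringOn G c univ ↔ IsInjColoring G c := by
  simp [IsInjColoringOn, IsInjColoring]

theorem IsInjColoring.isInjColoringOn_of_isSpanning {H : G.Subgraph} (hH : H.IsSpanning)
    {c : H.verts → α} (hc : IsInjColoring H.coe c) {T : Finset V}
    (hT : ∀ u ∈ T, ∀ w, G.Adj u w → H.Adj u w) :
    IsInjColoringOn G (fun v => c ⟨v, hH v⟩) T := by
  rintro u v hu hv huv ⟨w, huw, hvw⟩
  exact hc (fun he => huv (congrArg Subtype.val he))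
    ⟨⟨w, hH w⟩, hT u hu w huw, hT v hv w hvw⟩

section Conflicts

variable [Fintype V] [DecidableRel G.Adj] [DecidableEq V]

variable (G) in
def injConflicts (T : Finset V) (v : V) : Finset V :=
  (G.neighborFinset v).biUnion fun w => (G.neighborFinset w ∩ T).erase v

theorem mem_injConflicts {T : Finset V} {v t : V} :
    t ∈ injConflicts G T v ↔ t ∈ T ∧ t ≠ v ∧ ∃ w, G.Adj v w ∧ G.Adj t w := by
  simp only [injConflicts, mem_biUnion, mem_erase, mem_inter, mem_neighborFinset]
  constructor
  · rintro ⟨w, hvw, htv, hwt, ht⟩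
    exact ⟨ht, htv, w, hvw, hwt.symm⟩
  · rintro ⟨ht, htv, w, hvw, htw⟩
    exact ⟨w, hvw, htv, htw.symm, ht⟩

theorem IsInjColoringOn.exists_update [Fintype α] {c : V → α} {T : Finset V}
    (hc : IsInjColoringOn G c T) (v : V) (hv : #(injConflicts G T v) < Fintype.card α) :
    ∃ a, IsInjColoringOn G (Function.update c v a) (insert v T) := by
  classical
  obtain ⟨a, -, ha⟩ := exists_mem_notMem_of_card_lt_card
    (s := (injConflicts G T v).image c) (t := univ) (card_image_le.trans_lt hv)
  have hfresh : ∀ t ∈ insert v T, t ≠ v → (∃ w, G.Adj v w ∧ G.Adj t w) →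
      Function.update c v a v ≠ Function.update c v a t := by
    intro t ht htv hw
    rw [Function.update_self, Function.update_of_ne htv]
    rintro rfl
    exact ha (mem_image_of_mem c (mem_injConflicts.2 ⟨(mem_insert.1 ht).resolve_left htv, htv, hw⟩))
  refine ⟨a, fun x y hx hy hxy hw => ?_⟩
  by_cases hxv : x = v
  · subst hxv
    exact hfresh y hy (Ne.symm hxy) hw
  by_cases hyv : y = v
  · subst hyv
    exact (hfresh x hx hxy (hw.imp fun _ => And.symm)).symm
  rw [Function.update_of_ne hxv, Function.update_of_ne hyv]
  exact hc ((mem_insert.1 hx).resolve_left hxv) ((mem_insert.1 hy).resolve_left hyv) hxy hw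

theorem card_neighborFinset_inter_erase_le {T : Finset V} {v w : V} (hwv : G.Adj w v) :
    #((G.neighborFinset w ∩ T).erase v) ≤ G.degree w - 1 := by
  rw [← card_neighborFinset_eq_degree, ← card_erase_of_mem ((mem_neighborFinset G w v).2 hwv)]
  exact card_le_card (erase_subset_erase v inter_subset_left)

theorem card_neighborFinset_inter_erase_le_of_notMem {T : Finset V} {v w x : V}
    (hwv : G.Adj w v) (hwx : G.Adj w x) (hxv : x ≠ v) (hxT : x ∉ T) :
    #((G.neighborFinset w ∩ T).erase v) ≤ G.degree w - 2 := by
  have hx : x ∈ (G.neighborFinset w).erase v := mem_erase.2 ⟨hxv, (mem_neighborFinset G w x).2 hwx⟩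
  have hcard : #(((G.neighborFinset w).erase v).erase x) = G.degree w - 2 := by
    rw [card_erase_of_mem hx, card_erase_of_mem ((mem_neighborFinset G w v).2 hwv),
      card_neighborFinset_eq_degree, Nat.sub_sub]
  rw [← hcard]
  refine card_le_card fun t ht => ?_
  obtain ⟨htv, htw, htT⟩ := by simpa only [mem_erase, mem_inter] using ht
  exact mem_erase.2 ⟨fun htx => hxT (htx ▸ htT), mem_erase.2 ⟨htv, htw⟩⟩

theorem card_injConflicts_le {Δ : ℕ} (hΔ : ∀ w, G.degree w ≤ Δ) {T s : Finset V} {v : V}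
    (hs : s ⊆ G.neighborFinset v) :
    #(injConflicts G T v) ≤
      ∑ w ∈ s, #((G.neighborFinset w ∩ T).erase v) + (G.degree v - #s) * (Δ - 1) := by
  have hrest : ∀ w ∈ G.neighborFinset v \ s, #((G.neighborFinset w ∩ T).erase v) ≤ Δ - 1 :=
    fun w hw => (card_neighborFinset_inter_erase_le
      ((mem_neighborFinset G v w).1 (mem_sdiff.1 hw).1).symm).trans (Nat.sub_le_sub_right (hΔ w) 1)
  calc #(injConflicts G T v)
      ≤ ∑ w ∈ G.neighborFinset v, #((G.neighborFinset w ∩ T).erase v) := card_biUnion_le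
    _ = ∑ w ∈ s, #((G.neighborFinset w ∩ T).erase v) +
          ∑ w ∈ G.neighborFinset v \ s, #((G.neighborFinset w ∩ T).erase v) :=
        by rw [← sum_sdiff hs, add_comm]
    _ ≤ ∑ w ∈ s, #((G.neighborFinset w ∩ T).erase v) + (G.degree v - #s) * (Δ - 1) := by
        gcongr
        simpa [card_sdiff_of_subset hs] using sum_le_card_nsmul _ _ _ hrest

theorem card_injConflicts_le_of_adj {Δ : ℕ} (hΔ : ∀ w, G.degree w ≤ Δ) {T : Finset V} {v a : V}
    (hva : G.Adj v a) :
    #(injConflicts G T v) ≤ G.degree a - 1 + (G.degree v - 1) * (Δ - 1) := by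
  have := card_injConflicts_le hΔ (T := T) (singleton_subset_iff.2 ((mem_neighborFinset G v a).2 hva))
  rw [sum_singleton, card_singleton] at this
  have := card_neighborFinset_inter_erase_le (T := T) hva.symm
  omega

theorem card_injConflicts_le_of_adj_of_adj {Δ : ℕ} (hΔ : ∀ w, G.degree w ≤ Δ) {T : Finset V}
    {v a b x : V} (hva : G.Adj v a) (hvb : G.Adj v b) (hab : a ≠ b) (hax : G.Adj a x)
    (hxv : x ≠ v) (hxT : x ∉ T) :
    #(injConflicts G T v) ≤ G.degree a - 2 + (G.degree b - 1) + (G.degree v - 2) * (Δ - 1) := by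
  have hs : {a, b} ⊆ G.neighborFinset v := by
    simp [insert_subset_iff, hva, hvb]
  have := card_injConflicts_le hΔ (T := T) hs
  rw [sum_pair hab, card_pair hab] at this
  have := card_neighborFinset_inter_erase_le_of_notMem hva.symm hax hxv hxT
  have := card_neighborFinset_inter_erase_le (T := T) hvb.symm
  omega

theorem exists_isInjColoring_of_recolor
    (hΔ : ∀ w, G.degree w ≤ 4) {u₁ u₂ v₁ v₂ : V} (h₁₂ : G.Adj u₁ u₂) (hu₁ : G.degree u₁ = 3)
    (hu₂ : G.degree u₂ = 3) (h₁ : G.Adj u₁ v₁) (hv₁ : G.degree v₁ = 2) (h₂ : G.Adj u₂ v₂)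
    (hv₂ : G.degree v₂ = 2) {c : V → Fin 6} (hc : IsInjColoringOn G c {u₁, u₂, v₁, v₂}ᶜ) :
    ∃ c' : V → Fin 6, IsInjColoring G c' := by
  have hu₂v₁ : u₂ ≠ v₁ := fun h => by rw [h] at hu₂; omega
  have hu₁v₂ : u₁ ≠ v₂ := fun h => by rw [h] at hu₁; omega
  obtain ⟨a₁, hc₁⟩ := hc.exists_update u₁ <|
    (card_injConflicts_le_of_adj_of_adj hΔ h₁₂ h₁ hu₂v₁ h₂ hu₁v₂.symm (by simp)).trans_lt
      (by simp [hu₁, hu₂, hv₁])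
  obtain ⟨a₂, hc₂⟩ := hc₁.exists_update u₂ <|
    (card_injConflicts_le_of_adj_of_adj hΔ h₁₂.symm h₂ hu₁v₂ h₁ hu₂v₁.symm
      (by simp [h₁.ne.symm])).trans_lt (by simp [hu₁, hu₂, hv₂])
  obtain ⟨b₁, hc₃⟩ := hc₂.exists_update v₁ <|
    (card_injConflicts_le_of_adj hΔ h₁.symm).trans_lt (by simp [hu₁, hv₁])
  obtain ⟨b₂, hc₄⟩ := hc₃.exists_update v₂ <|
    (card_injConflicts_le_of_adj hΔ h₂.symm).trans_lt (by simp [hu₂, hv₂])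
  refine ⟨_, isInjColoringOn_univ.1 (hc₄.mono fun t _ => ?_)⟩
  simp only [mem_insert, mem_compl, mem_singleton]
  tauto

end Conflicts

end InjectiveColoring

/-- (RC5 for `Δ = 4`.)  Suppose `Δ(G) = 4` and every proper subgraph `H` of `G`
satisfies `χᵢ(H) ≤ 6`.  If `G` has two adjacent `3`-vertices, each adjacent to some
(possibly the same) `2`-vertex, then `χᵢ(G) ≤ 6`. -/
theorem rc5_maxDegree_four {V : Type*} [Fintype V] (G : SimpleGraph V)
    [DecidableRel G.Adj] (hΔ : G.maxDegree = 4)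
    (hmin : ∀ H : G.Subgraph, H ≠ ⊤ → injChromNum H.coe ≤ 6)
    (h : ∃ u₁ u₂ v₁ v₂ : V, G.Adj u₁ u₂ ∧ G.degree u₁ = 3 ∧ G.degree u₂ = 3 ∧
      G.Adj u₁ v₁ ∧ G.degree v₁ = 2 ∧ G.Adj u₂ v₂ ∧ G.degree v₂ = 2) :
    injChromNum G ≤ 6 := by
  classical
  obtain ⟨u₁, u₂, v₁, v₂, h₁₂, hu₁, hu₂, h₁, hv₁, h₂, hv₂⟩ := h
  set H := (⊤ : G.Subgraph).deleteEdges {s(u₁, u₂)}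
  have hH : H ≠ ⊤ := fun hH => by
    have : H.Adj u₁ u₂ := hH ▸ h₁₂
    simp [H] at this
  obtain ⟨c, hc⟩ := exists_isInjColoring_of_injChromNum_le (hmin H hH)
  have hcOn := hc.isInjColoringOn_of_isSpanning (fun _ => Set.mem_univ _)
    (T := {u₁, u₂, v₁, v₂}ᶜ) fun u hu w huw => by
      simp only [mem_compl, mem_insert, mem_singleton, not_or] at hu
      simp [H, huw, hu.1, hu.2.1]
  obtain ⟨c', hc'⟩ := exists_isInjColoring_of_recolor (fun w => hΔ ▸ G.degree_le_maxDegree w)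
    h₁₂ hu₁ hu₂ h₁ hv₁ h₂ hv₂ hcOn
  exact injChromNum_le_of_isInjColoring hc'
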